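/- Let u : ℝ² → ℝ be three times continuously differentiable with |D³u(q)[e,e,e]| ≤ K·|e|³ for all q, e ∈ ℝ². Let x₁ ≠ x₂ ∈ ℝ², h = |x₂ − x₁|, m = (x₁ + x₂)/2, and suppose K·h² ≤ 1. Then there exists a unit vector w ∈ ℝ³ with w·(x₂ − x₁, u(x₂) − u(x₁)) = 0 and |w − 𝐧(∇u(m))| ≤ K·h². -/

import Mathlib

open scoped RealInnerProductSpace

noncomputable section

/-- Euclidean plane and 3-space. -/
abbrev E2 := EuclideanSpace ℝ (Fin 2)
abbrev E3 := EuclideanSpace ℝ (Fin 3)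

/-- The vector `(v, t) ∈ ℝ³` with first two components `v ∈ ℝ²` and last
component `t ∈ ℝ`. -/
def toR3 (v : E2) (t : ℝ) : E3 :=
  (WithLp.equiv 2 (Fin 3 → ℝ)).symm ![v 0, v 1, t]

/-- The upward unit normal `𝐧(p) = (−p, 1)/√(1+|p|²)` of a graph with
gradient `p`. -/
def gauss (p : E2) : E3 := (Real.sqrt (1 + ‖p‖ ^ 2))⁻¹ • toR3 (-p) 1

/-! The chord `c = (x₂ - x₁, u x₂ - u x₁)` is almost orthogonal to `𝐧 = 𝐧(∇u(m))`: since
`𝐧 ∝ (-∇u(m), 1)`, `⟪𝐧, c⟫` is at most the symmetric Taylor remainder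
`u x₂ - u x₁ - ⟪∇u(m), x₂ - x₁⟫`, whose even-order terms cancel about the midpoint, leaving
`K h³ / 24 ≤ (K h² / 24) ‖c‖`. Normalising the projection of `𝐧` onto `c`ᗮ then yields a unit
`w ⊥ c` within `2 · K h² / 24` of `𝐧`. -/

open Set

section Taylor

theorem exists_taylor_two_lagrange {g : ℝ → ℝ} (hg : ContDiff ℝ 3 g) (x : ℝ) :
    ∃ ξ, g x = g 0 + deriv g 0 * x + iteratedDeriv 2 g 0 * x ^ 2 / 2 +
      iteratedDeriv 3 g ξ * x ^ 3 / 6 := by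
  rcases eq_or_ne x 0 with rfl | hx
  · exact ⟨0, by simp⟩
  obtain ⟨ξ, -, hξ⟩ := taylor_mean_remainder_lagrange_iteratedDeriv (n := 2) hx.symm
    hg.contDiffOn
  have hwithin : ∀ k ≤ 2, iteratedDerivWithin k g (uIcc 0 x) 0 = iteratedDeriv k g 0 :=
    fun k hk => iteratedDerivWithin_eq_iteratedDeriv (uniqueDiffOn_uIcc hx.symm)
      (hg.contDiffAt.of_le (by exact_mod_cast hk.trans (by norm_num))) left_mem_uIcc
  refine ⟨ξ, ?_⟩
  simp only [taylor_within_apply, Finset.sum_range_succ, Finset.sum_range_zero,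
    hwithin 0 (by norm_num), hwithin 1 (by norm_num), hwithin 2 (by norm_num),
    iteratedDeriv_zero, iteratedDeriv_one, smul_eq_mul] at hξ
  norm_num [Nat.factorial] at hξ
  linarith

theorem abs_sub_neg_sub_two_mul_deriv_le {g : ℝ → ℝ} (hg : ContDiff ℝ 3 g) {M : ℝ}
    (hM : ∀ t, |iteratedDeriv 3 g t| ≤ M) (x : ℝ) :
    |g x - g (-x) - 2 * x * deriv g 0| ≤ M * |x| ^ 3 / 3 := by
  obtain ⟨ξ, hξ⟩ := exists_taylor_two_lagrange hg x
  obtain ⟨η, hη⟩ := exists_taylor_two_lagrange hg (-x)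
  have hodd : g x - g (-x) - 2 * x * deriv g 0 =
      (iteratedDeriv 3 g ξ + iteratedDeriv 3 g η) * x ^ 3 / 6 := by
    rw [hξ, hη]; ring
  have hsum := (abs_add_le _ _).trans (add_le_add (hM ξ) (hM η))
  rw [hodd, abs_div, abs_mul, abs_pow, abs_of_pos (by norm_num : (0:ℝ) < 6)]
  have : 0 ≤ |x| ^ 3 := by positivity
  nlinarith

variable {E : Type*} [NormedAddCommGroup E] [NormedSpace ℝ E]

theorem iteratedDeriv_comp_add_smul {u : E → ℝ} (hu : ContDiff ℝ 3 u) (m d : E) {n : ℕ}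
    (hn : n ≤ 3) (t : ℝ) :
    iteratedDeriv n (fun s : ℝ => u (m + s • d)) t =
      iteratedFDeriv ℝ n u (m + t • d) (fun _ => d) := by
  let L : ℝ →L[ℝ] E := (ContinuousLinearMap.id ℝ ℝ).smulRight d
  have hshift : ContDiff ℝ 3 (fun x : E => u (m + x)) :=
    hu.comp (contDiff_const.add contDiff_id)
  change iteratedDeriv n ((fun x : E => u (m + x)) ∘ L) t = _
  rw [iteratedDeriv_eq_iteratedFDeriv,
    L.iteratedFDeriv_comp_right hshift t (by exact_mod_cast hn), iteratedFDeriv_comp_add_left]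
  simp [L]

theorem abs_sub_sub_two_mul_fderiv_le {u : E → ℝ} (hu : ContDiff ℝ 3 u) (m d : E) {M : ℝ}
    (hM : ∀ q, |iteratedFDeriv ℝ 3 u q (fun _ => d)| ≤ M) :
    |u (m + d) - u (m - d) - 2 * fderiv ℝ u m d| ≤ M / 3 := by
  have hline : ContDiff ℝ 3 (fun s : ℝ => u (m + s • d)) :=
    hu.comp (contDiff_const.add (contDiff_id.smul contDiff_const))
  have hderiv : deriv (fun s : ℝ => u (m + s • d)) 0 = fderiv ℝ u m d := by
    rw [← iteratedDeriv_one, iteratedDeriv_comp_add_smul hu m d (by norm_num),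
      iteratedFDeriv_one_apply]
    simp
  have := abs_sub_neg_sub_two_mul_deriv_le hline
    (fun t => by rw [iteratedDeriv_comp_add_smul hu m d le_rfl t]; exact hM _) 1
  simpa [hderiv, ← sub_eq_add_neg] using this

theorem abs_sub_sub_inner_gradient_midpoint_le {F : Type*} [NormedAddCommGroup F]
    [InnerProductSpace ℝ F] [CompleteSpace F] {u : F → ℝ} (hu : ContDiff ℝ 3 u) {K : ℝ}
    (hbound : ∀ q e : F, |iteratedFDeriv ℝ 3 u q (fun _ => e)| ≤ K * ‖e‖ ^ 3) (x y : F) :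
    |u y - u x - ⟪gradient u (midpoint ℝ x y), y - x⟫| ≤ K * ‖y - x‖ ^ 3 / 24 := by
  set m := midpoint ℝ x y
  set d : F := (2 : ℝ)⁻¹ • (y - x)
  have hm : m = (2 : ℝ)⁻¹ • (x + y) := midpoint_eq_smul_add ℝ x y
  have hy : m + d = y := by rw [hm]; module
  have hx : m - d = x := by rw [hm]; module
  have hd : ‖d‖ = ‖y - x‖ / 2 := by rw [norm_smul, norm_inv, Real.norm_two, inv_mul_eq_div]
  have hgrad : ⟪gradient u m, y - x⟫ = 2 * fderiv ℝ u m d := by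
    rw [← InnerProductSpace.toDual_apply_apply, toDual_gradient,
      show y - x = (2 : ℝ) • d by module, map_smul, smul_eq_mul]
  have := abs_sub_sub_two_mul_fderiv_le hu m d (hbound · d)
  rw [hy, hx, ← hgrad, hd] at this
  linarith

end Taylor

theorem inner_toR3 (v v' : E2) (t t' : ℝ) :
    ⟪toR3 v t, toR3 v' t'⟫ = ⟪v, v'⟫ + t * t' := by
  simp [toR3, PiLp.inner_apply, Fin.sum_univ_three, Fin.sum_univ_two, mul_comm]

theorem norm_toR3_sq (v : E2) (t : ℝ) : ‖toR3 v t‖ ^ 2 = ‖v‖ ^ 2 + t ^ 2 := by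
  rw [← real_inner_self_eq_norm_sq, inner_toR3, real_inner_self_eq_norm_sq, sq t]

theorem norm_le_norm_toR3 (v : E2) (t : ℝ) : ‖v‖ ≤ ‖toR3 v t‖ :=
  (pow_le_pow_iff_left₀ (norm_nonneg _) (norm_nonneg _) two_ne_zero).1
    (by rw [norm_toR3_sq]; nlinarith [sq_nonneg t])

theorem norm_gauss (p : E2) : ‖gauss p‖ = 1 := by
  have hs : 0 < √(1 + ‖p‖ ^ 2) := by positivity
  rw [gauss, norm_smul, norm_inv, Real.norm_of_nonneg hs.le, inv_mul_eq_one₀ hs.ne',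
    ← Real.sqrt_sq (norm_nonneg (toR3 (-p) 1)), norm_toR3_sq, norm_neg, one_pow, add_comm]

theorem abs_inner_gauss_toR3_le (p v : E2) (t : ℝ) :
    |⟪gauss p, toR3 v t⟫| ≤ |t - ⟪p, v⟫| := by
  have hs : 1 ≤ √(1 + ‖p‖ ^ 2) := Real.one_le_sqrt.2 (by nlinarith [norm_nonneg p])
  rw [gauss, real_inner_smul_left, inner_toR3, inner_neg_left, abs_mul,
    abs_inv, abs_of_pos (by positivity : 0 < √(1 + ‖p‖ ^ 2))]
  calc _ ≤ 1 * |-⟪p, v⟫ + 1 * t| := by gcongr; exact inv_le_one_of_one_le₀ hs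
    _ = |t - ⟪p, v⟫| := by rw [one_mul, one_mul, neg_add_eq_sub]

section Orthogonal

variable {H : Type*} [NormedAddCommGroup H] [InnerProductSpace ℝ H]

/-- `w` is the normalised projection of `n` onto `e`ᗮ: projecting moves `n` by `|⟪n, e⟫|`,
normalising moves it by at most `⟪n, e⟫ ^ 2`. -/
theorem exists_unit_orthogonal_near_of_unit {n e : H} (hn : ‖n‖ = 1) (he : ‖e‖ = 1)
    (hε : |⟪n, e⟫| < 1) :
    ∃ w : H, ‖w‖ = 1 ∧ ⟪w, e⟫ = 0 ∧ ‖w - n‖ ≤ |⟪n, e⟫| + ⟪n, e⟫ ^ 2 := by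
  set ε := ⟪n, e⟫
  set v := n - ε • e
  have hve : ⟪v, e⟫ = 0 := by
    rw [inner_sub_left, real_inner_smul_left, real_inner_self_eq_norm_sq, he, one_pow, mul_one,
      sub_self]
  have hv_sq : ‖v‖ ^ 2 = 1 - ε ^ 2 := by
    rw [norm_sub_sq_real, hn, real_inner_smul_right, norm_smul, he, Real.norm_eq_abs, mul_one,
      sq_abs]
    ring
  have hv_pos : 0 < ‖v‖ := by
    rw [← sq_lt_one_iff_abs_lt_one] at hε
    exact lt_of_pow_lt_pow_left₀ 2 (norm_nonneg v) (by rw [hv_sq]; linarith)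
  have hv_le : ‖v‖ ≤ 1 := by nlinarith [sq_nonneg ε]
  refine ⟨‖v‖⁻¹ • v, norm_smul_inv_norm (norm_ne_zero_iff.mp hv_pos.ne'),
    by rw [real_inner_smul_left, hve, mul_zero], ?_⟩
  have hnormalise : ‖‖v‖⁻¹ • v - v‖ = 1 - ‖v‖ := by
    have : 1 ≤ ‖v‖⁻¹ := one_le_inv₀ hv_pos |>.2 hv_le
    rw [show ‖v‖⁻¹ • v - v = (‖v‖⁻¹ - 1) • v by rw [sub_smul, one_smul], norm_smul,
      Real.norm_of_nonneg (by linarith), sub_mul, inv_mul_cancel₀ hv_pos.ne', one_mul]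
  have hproject : ‖v - n‖ = |ε| := by
    rw [sub_sub_cancel_left, norm_neg, norm_smul, he, mul_one, Real.norm_eq_abs]
  calc ‖‖v‖⁻¹ • v - n‖ ≤ ‖‖v‖⁻¹ • v - v‖ + ‖v - n‖ := norm_sub_le_norm_sub_add_norm_sub _ _ _
    _ ≤ |ε| + ε ^ 2 := by rw [hnormalise, hproject]; nlinarith

theorem exists_unit_orthogonal_near {n c : H} (hn : ‖n‖ = 1) (hc : c ≠ 0) {δ : ℝ} (hδ : δ < 1)
    (hnc : |⟪n, c⟫| ≤ δ * ‖c‖) :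
    ∃ w : H, ‖w‖ = 1 ∧ ⟪w, c⟫ = 0 ∧ ‖w - n‖ ≤ 2 * δ := by
  have hc' : 0 < ‖c‖ := norm_pos_iff.2 hc
  set e := ‖c‖⁻¹ • c
  have hne : |⟪n, e⟫| ≤ δ := by
    rwa [real_inner_smul_right, abs_mul, abs_inv, abs_norm, inv_mul_le_iff₀ hc', mul_comm]
  have he : ‖e‖ = 1 := by rw [norm_smul, norm_inv, norm_norm, inv_mul_cancel₀ hc'.ne']
  obtain ⟨w, hw, hwe, hwn⟩ := exists_unit_orthogonal_near_of_unit hn he (hne.trans_lt hδ)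
  refine ⟨w, hw, ?_, ?_⟩
  · rwa [real_inner_smul_right, mul_eq_zero, or_iff_right (inv_ne_zero hc'.ne')] at hwe
  · have : ⟪n, e⟫ ^ 2 ≤ |⟪n, e⟫| := by
      rw [← sq_abs]; nlinarith [abs_nonneg ⟪n, e⟫]
    linarith

end Orthogonal

/-- on every edge of size `h` one can choose a unit edge director
(a unit vector orthogonal to the chord of the graph over the edge) within
distance `K·h²` of the exact surface normal at the edge midpoint. -/
theorem stmt_9 (u : E2 → ℝ) (hu : ContDiff ℝ 3 u) (K : ℝ)
    (hbound : ∀ q e : E2, |iteratedFDeriv ℝ 3 u q ![e, e, e]| ≤ K * ‖e‖ ^ 3)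
    (x₁ x₂ : E2) (hne : x₁ ≠ x₂)
    (hsmall : K * ‖x₂ - x₁‖ ^ 2 ≤ 1) :
    ∃ w : E3, ‖w‖ = 1 ∧ ⟪w, toR3 (x₂ - x₁) (u x₂ - u x₁)⟫ = 0 ∧
      ‖w - gauss (gradient u (midpoint ℝ x₁ x₂))‖ ≤ K * ‖x₂ - x₁‖ ^ 2 := by
  set h := ‖x₂ - x₁‖
  set c := toR3 (x₂ - x₁) (u x₂ - u x₁)
  have hh : 0 < h := norm_pos_iff.2 (sub_ne_zero.2 hne.symm)
  have hK : 0 ≤ K :=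
    nonneg_of_mul_nonneg_left ((abs_nonneg _).trans (hbound 0 (x₂ - x₁))) (by positivity)
  have hdiag (e : E2) : ![e, e, e] = fun _ => e := by funext i; fin_cases i <;> rfl
  have hchord := abs_sub_sub_inner_gradient_midpoint_le hu
    (fun q e => by simpa only [hdiag] using hbound q e) x₁ x₂
  have htilt : |⟪gauss (gradient u (midpoint ℝ x₁ x₂)), c⟫| ≤ K * h ^ 2 / 24 * ‖c‖ :=
    calc _ ≤ K * h ^ 3 / 24 := (abs_inner_gauss_toR3_le _ _ _).trans hchord
      _ = K * h ^ 2 / 24 * h := by ring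
      _ ≤ K * h ^ 2 / 24 * ‖c‖ := by gcongr; exact norm_le_norm_toR3 _ _
  have hc : c ≠ 0 := norm_pos_iff.1 (hh.trans_le (norm_le_norm_toR3 _ _))
  obtain ⟨w, hw, hwc, hwn⟩ := exists_unit_orthogonal_near (norm_gauss _) hc (by linarith) htilt
  exact ⟨w, hw, hwc, hwn.trans (by nlinarith [sq_nonneg h])⟩
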